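/- Let k be a positive integer and p₀, p₁, p₂ ∈ P_k. The following four quantities are equal: (1) df(p₁∘p₂, p₀) + η(p₁,p₂); (2) df(p₁, p₀) + df(p₂, ᵗp₁∘p₀); (3) df(p₁, p₀∘ᵗp₂) + df(p₂, p₀); (4) df(p₁⊗p₂, (p₀⊗id_k)∘τ), where τ ∈ P_{2k} is the permutation partition of the product of transpositions (1,k+1)(2,k+2)⋯(k,2k) and df in (4) is the defect in P_{2k} with base id_{2k}. -/

import Mathlib

open Sum
open scoped Classical

noncomputable section

namespace PartitionPaper

variable {X : Type*}

/-- The number of blocks of a partition of `X`, encoded as a setoid on `X`. -/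
def nc (p : Setoid X) : ℕ := Nat.card (Quotient p)

/-- The geodesic distance `d(p,p') = (nc p + nc p')/2 - nc (p ⊔ p')`. -/
def pdist (p q : Setoid X) : ℚ :=
  ((nc p : ℚ) + (nc q : ℚ)) / 2 - (nc (p ⊔ q) : ℚ)

/-- Geodesic order with base partition `b` : `p' ≤_b p`. -/
def geoLE (b p' p : Setoid X) : Prop := pdist b p' + pdist p' p = pdist b p

/-- Coarser-compatible order `p' ⊣_b p` : `p'` coarser than `p` and
`nc (p' ⊔ b) = nc (p ⊔ b)`.  (In the setoid lattice, `p ≤ p'` means `p` is finer.) -/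
def coarserComp (b p' p : Setoid X) : Prop :=
  p ≤ p' ∧ nc (p' ⊔ b) = nc (p ⊔ b)

/-- Finer-compatible order `p' ⊐_b p` : `p'` finer than `p` and
`nc p' - nc (p' ⊔ b) = nc p - nc (p ⊔ b)`. -/
def finerComp (b p' p : Setoid X) : Prop :=
  p' ≤ p ∧ (nc p' : ℤ) - (nc (p' ⊔ b) : ℤ) = (nc p : ℤ) - (nc (p ⊔ b) : ℤ)

/-- `p'` is obtained from `p` by gluing two blocks of `p` into one. -/
def IsGluing (p p' : Setoid X) : Prop := p ≤ p' ∧ nc p' + 1 = nc p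

/-- The Cayley graph on partitions of `X`: an edge iff one partition is obtained
from the other by gluing two of its blocks into one. -/
def glueGraph (X : Type*) : SimpleGraph (Setoid X) where
  Adj p q := IsGluing p q ∨ IsGluing q p
  symm := ⟨fun _ _ h => h.elim Or.inr Or.inl⟩
  loopless := by
    constructor
    intro p h
    rcases h with ⟨-, h⟩ | ⟨-, h⟩ <;> omega

/-- The segment `[p₁, p₂]` for the geodesic distance. -/
def seg (p₁ p₂ : Setoid X) : Set (Setoid X) :=
  {p | pdist p₁ p + pdist p p₂ = pdist p₁ p₂}

/-- The defect of `p'` from being on `[b, p]`. -/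
def df (b p' p : Setoid X) : ℚ := pdist b p' + pdist p' p - pdist b p

/-- Admissible one-step splits: `p'` is obtained by cutting a (pivotal) block of `p`
into two blocks in such a way that the join with `b` gains one block. -/
def Delta (b p : Setoid X) : Set (Setoid X) :=
  {p' | p' ≤ p ∧ nc p' = nc p + 1 ∧ nc (p' ⊔ b) = nc (p ⊔ b) + 1}

/-- The admissible splits `Sp_b(p) = ⋃ₘ Δ_b^m(p)`. -/
def Sp (b p : Setoid X) : Set (Setoid X) :=
  {p' | Relation.ReflTransGen (fun u v => v ∈ Delta b u) p p'}

/-- The admissible gluings `Gl_b(p)`: partitions obtained by gluing blocks of `p`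
without altering the number of blocks of the join with `b`. -/
def Gl (b p : Setoid X) : Set (Setoid X) :=
  {p' | p ≤ p' ∧ nc (p' ⊔ b) = nc (p ⊔ b)}

/-- `p'` is directly smaller than `p` for the relation `r`. -/
def DirectlySmaller (r : Setoid X → Setoid X → Prop) (p' p : Setoid X) : Prop :=
  r p' p ∧ p' ≠ p ∧ ¬ ∃ p'', p'' ≠ p ∧ p'' ≠ p' ∧ r p' p'' ∧ r p'' p

/-- The block of the partition `p` corresponding to a class `c`. -/
def blockSet (p : Setoid X) (c : Quotient p) : Set X := {x | Quotient.mk p x = c}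

/-- The number of blocks of `q` contained in the block `c` of `p`. -/
def numSubBlocks (q p : Setoid X) (c : Quotient p) : ℕ :=
  Nat.card {d : Quotient q // blockSet q d ⊆ blockSet p c}

/-- The number of blocks of `p` containing exactly `i` blocks of `q`. -/
def rcount (q p : Setoid X) (i : ℕ) : ℕ :=
  Nat.card {c : Quotient p // numSubBlocks q p c = i}

/-- The Möbius function of the refinement order:
`μ_f(q,p) = (-1)^(nc q - nc p) ∏_i ((i-1)!)^(r_i)` for `q` finer than `p`. -/
def muf (q p : Setoid X) : ℤ :=
  (-1) ^ (nc q - nc p) *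
    ∏ i ∈ Finset.range (nc q + 1), ((Nat.factorial (i - 1) : ℤ)) ^ (rcount q p i)

/-- `P_k`: partitions of `{1,…,k} ∪ {1',…,k'}`, the left summand being the
unprimed (top) row and the right summand the primed (bottom) row. -/
abbrev Pk (k : ℕ) := Setoid (Fin k ⊕ Fin k)

/-- The identity partition `id_k = {{i, i'} : 1 ≤ i ≤ k}`. -/
def idk (k : ℕ) : Pk k := Setoid.ker (Sum.elim id id)

/-- The permutation partition associated with `σ`, with blocks `{i, σ(i)'}`. -/
def permPartition {k : ℕ} (σ : Equiv.Perm (Fin k)) : Pk k :=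
  Setoid.ker (Sum.elim id σ.symm)

/-- `S_k`, the set of permutation partitions. -/
def Sk (k : ℕ) : Set (Pk k) := Set.range (permPartition (k := k))

/-- `B_k`, the set of Brauer partitions: all blocks have exactly two elements. -/
def Bk (k : ℕ) : Set (Pk k) := {p | ∀ x, Nat.card {y | p.r x y} = 2}

/-- Embedding of the top/bottom rows of the upper diagram `q` into the
three-row diagram (top ⊕ (middle ⊕ bottom)). -/
def upMap (k : ℕ) : Fin k ⊕ Fin k → Fin k ⊕ (Fin k ⊕ Fin k) :=
  Sum.elim Sum.inl (fun i => Sum.inr (Sum.inl i))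

/-- Embedding of the top/bottom rows of the lower diagram `p` into the
three-row diagram. -/
def downMap (k : ℕ) : Fin k ⊕ Fin k → Fin k ⊕ (Fin k ⊕ Fin k) :=
  Sum.elim (fun i => Sum.inr (Sum.inl i)) (fun i => Sum.inr (Sum.inr i))

/-- The partition of the three-row diagram obtained by stacking a diagram of `q`
on top of a diagram of `p` (identifying the bottom row of `q` with the top row
of `p`): the equivalence relation generated by the copies of `q` and `p`. -/
def stackSetoid {k : ℕ} (p q : Pk k) : Setoid (Fin k ⊕ (Fin k ⊕ Fin k)) :=
  sInf {s | ∀ x y,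
    ((∃ a b, upMap k a = x ∧ upMap k b = y ∧ q.r a b) ∨
     (∃ a b, downMap k a = x ∧ downMap k b = y ∧ p.r a b)) → s.r x y}

/-- The composition `p ∘ q` (a diagram of `q` stacked above a diagram of `p`),
obtained by restricting the stacked partition to the outer rows. -/
def comp {k : ℕ} (p q : Pk k) : Pk k :=
  Setoid.comap (Sum.elim Sum.inl (fun i => Sum.inr (Sum.inr i))) (stackSetoid p q)

/-- `κ(p,q)`: the number of connected components of the stacked diagram entirely
contained in the middle row. -/
def kappaP {k : ℕ} (p q : Pk k) : ℕ :=
  Nat.card {c : Quotient (stackSetoid p q) //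
    ∀ x, Quotient.mk (stackSetoid p q) x = c → ∃ i : Fin k, x = Sum.inr (Sum.inl i)}

/-- The transpose `ᵗp`, exchanging the two rows. -/
def transpose {k : ℕ} (p : Pk k) : Pk k := Setoid.comap Sum.swap p

/-- The disjoint-union partition on a sum type. -/
def sumSetoid {α β : Type*} (p : Setoid α) (q : Setoid β) : Setoid (α ⊕ β) :=
  Setoid.ker (Sum.map (Quotient.mk p) (Quotient.mk q))

/-- Reindexing of the rows for the tensor product. -/
def reindex (k l : ℕ) :
    Fin (k + l) ⊕ Fin (k + l) → (Fin k ⊕ Fin k) ⊕ (Fin l ⊕ Fin l) :=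
  Sum.elim
    (fun j => Sum.elim (fun a => Sum.inl (Sum.inl a)) (fun b => Sum.inr (Sum.inl b))
      (finSumFinEquiv.symm j))
    (fun j => Sum.elim (fun a => Sum.inl (Sum.inr a)) (fun b => Sum.inr (Sum.inr b))
      (finSumFinEquiv.symm j))

/-- The tensor product `p ⊗ q ∈ P_{k+l}`: a diagram of `p` placed to the left of
a diagram of `q`. -/
def tensor {k l : ℕ} (p : Pk k) (q : Pk l) : Pk (k + l) :=
  Setoid.comap (reindex k l) (sumSetoid p q)

/-- The `≺`-defect `η(p,q)`. -/
def eta {k : ℕ} (p q : Pk k) : ℚ :=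
  pdist (idk k) p + pdist (idk k) q - pdist (idk k) (comp p q)
    - ((k : ℚ) + (nc (comp p q) : ℚ) - (nc p : ℚ) - (nc q : ℚ)) / 2 - (kappaP p q : ℚ)

/-- The Kreweras complement of `p'` in `p`: the set of `p''` with `p = p' ∘ p''`
realizing equality in the `≺`-defect inequality. -/
def Krew {k : ℕ} (p p' : Pk k) : Set (Pk k) :=
  {p'' | comp p' p'' = p ∧ eta p' p'' = 0}

/-- `p' ≺ p` : `p'` is an admissible prefix of `p`. -/
def prec {k : ℕ} (p' p : Pk k) : Prop :=
  ∃ p'', comp p' p'' = p ∧ eta p' p'' = 0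

/-- The partition of `{1,…,k}` into the orbits (cycles) of the permutation `σ`. -/
def cycleSetoid {k : ℕ} (σ : Equiv.Perm (Fin k)) : Setoid (Fin k) :=
  ⟨σ.SameCycle,
    ⟨fun x => Equiv.Perm.SameCycle.refl σ x, fun h => h.symm, fun h₁ h₂ => h₁.trans h₂⟩⟩

/-- A partition of `{1,…,k}` is non-crossing if there are no `a < b < c < d` with
`a, c` in one block and `b, d` in a different block. -/
def NonCrossing {k : ℕ} (π : Setoid (Fin k)) : Prop :=
  ¬ ∃ a b c d : Fin k, a < b ∧ b < c ∧ c < d ∧ π.r a c ∧ π.r b d ∧ ¬ π.r a b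

/-- The map sending a permutation partition to the partition of `{1,…,k}` into
the orbits of the corresponding bijection (the blocks of `p ⊔ id_k` restricted
to the top row). -/
def orbitMap {k : ℕ} (p : Pk k) : Setoid (Fin k) :=
  Setoid.comap (Sum.inl : Fin k → Fin k ⊕ Fin k) (p ⊔ idk k)

/-- The permutation `(1,k+1)(2,k+2)⋯(k,2k)` of `{1,…,2k}`. -/
def tauPerm (k : ℕ) : Equiv.Perm (Fin (k + k)) :=
  (finSumFinEquiv.symm.trans (Equiv.sumComm (Fin k) (Fin k))).trans finSumFinEquiv

/-- The left part of a partition in `P_{k₁+k₂}`. -/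
def leftPart {k₁ k₂ : ℕ} (p : Pk (k₁ + k₂)) : Pk k₁ :=
  Setoid.comap (Sum.map (Fin.castAdd k₂) (Fin.castAdd k₂)) p

/-- The right part of a partition in `P_{k₁+k₂}`. -/
def rightPart {k₁ k₂ : ℕ} (p : Pk (k₁ + k₂)) : Pk k₂ :=
  Setoid.comap (Sum.map (Fin.natAdd k₁) (Fin.natAdd k₁)) p

/-- The `p`-moment `m_p(E_N) = Tr_N(E_N ᵗp)/N^{nc(p ⊔ id_k)}
`= ∑_{p'} (E_N)_{p'} N^{nc(p ⊔ p') - nc(p ⊔ id_k)}`. -/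
def momentF {k : ℕ} (E : ℕ → Pk k → ℂ) (p : Pk k) (N : ℕ) : ℂ :=
  ∑ᶠ p' : Pk k, E N p' * (N : ℂ) ^ ((nc (p ⊔ p') : ℤ) - (nc (p ⊔ idk k) : ℤ))

/-- The `p`-cumulant `κ_p(E_N) = N^{nc p - nc (p ⊔ id_k)} (E_N)_p`. -/
def cumulantF {k : ℕ} (E : ℕ → Pk k → ℂ) (p : Pk k) (N : ℕ) : ℂ :=
  (N : ℂ) ^ ((nc p : ℤ) - (nc (p ⊔ idk k) : ℤ)) * E N p

section Infra

variable {α β γ : Type*}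

/-- pushforward of a setoid along a map -/
def push (f : α → β) (s : Setoid α) : Setoid β :=
  Relation.EqvGen.setoid (fun x y => ∃ a b, f a = x ∧ f b = y ∧ s a b)

theorem push_rel (f : α → β) (s : Setoid α) {a b : α} (h : s a b) :
    (push f s) (f a) (f b) :=
  Relation.EqvGen.rel _ _ ⟨a, b, rfl, rfl, h⟩

theorem push_le_iff {f : α → β} {s : Setoid α} {t : Setoid β} :
    push f s ≤ t ↔ ∀ a b, s a b → t (f a) (f b) := by
  constructor
  · intro h a b hab
    exact h (push_rel f s hab)
  · intro h
    exact Setoid.eqvGen_le (fun x y ⟨a, b, ha, hb, hab⟩ => ha ▸ hb ▸ h a b hab)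

theorem push_sup (f : α → β) (s t : Setoid α) :
    push f (s ⊔ t) = push f s ⊔ push f t := by
  apply le_antisymm
  · rw [push_le_iff]
    intro a b hab
    have : s ⊔ t ≤ Setoid.comap f (push f s ⊔ push f t) := by
      apply sup_le
      · intro x y h; exact le_sup_left (α := Setoid β) (push_rel f s h)
      · intro x y h; exact le_sup_right (α := Setoid β) (push_rel f t h)
    exact this hab
  · apply sup_le <;> rw [push_le_iff] <;> intro a b hab
    · exact push_rel f _ (le_sup_left (α := Setoid α) hab)
    · exact push_rel f _ (le_sup_right (α := Setoid α) hab)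

theorem push_push (g : β → γ) (f : α → β) (s : Setoid α) :
    push g (push f s) = push (g ∘ f) s := by
  apply le_antisymm
  · rw [push_le_iff]
    have : push f s ≤ Setoid.comap g (push (g ∘ f) s) := by
      rw [push, Setoid.eqvGen_eq]
      apply sInf_le
      rintro x y ⟨a, b, rfl, rfl, hab⟩
      exact push_rel (g ∘ f) s hab
    exact fun a b hab => this hab
  · rw [push_le_iff]
    intro a b hab
    exact push_rel g _ (push_rel f s hab)

theorem push_id (s : Setoid α) : push id s = s := by
  apply le_antisymm
  · rw [push_le_iff]; exact fun a b h => h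
  · intro a b h; exact push_rel id s h


variable {α β γ : Type*}

theorem comap_comp' (f : α → β) (g : β → γ) (s : Setoid γ) :
    Setoid.comap f (Setoid.comap g s) = Setoid.comap (g ∘ f) s := rfl

theorem push_equiv (e : α ≃ β) (s : Setoid α) :
    push (⇑e) s = Setoid.comap (⇑e.symm) s := by
  apply le_antisymm
  · rw [push_le_iff]
    intro a b hab
    rw [Setoid.comap_rel]
    simpa using hab
  · intro a b hab
    rw [Setoid.comap_rel] at hab
    have := push_rel (⇑e) s hab
    simpa using this

theorem comap_surjective_quot_equiv {f : α → β} (hf : Function.Surjective f) (s : Setoid β) :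
    Nonempty (Quotient (Setoid.comap f s) ≃ Quotient s) := by
  refine ⟨(Setoid.comapQuotientEquiv f s).trans ?_⟩
  have hr : Set.range (Quotient.mk s ∘ f) = Set.univ := by
    rw [Set.range_comp, Set.range_eq_univ.2 hf, Set.image_univ,
      Set.range_eq_univ.2 Quotient.mk_surjective]
  exact (Equiv.setCongr hr).trans (Equiv.Set.univ _)

theorem nc_comap_surjective {f : α → β} (hf : Function.Surjective f) (s : Setoid β) :
    nc (Setoid.comap f s) = nc s :=
  Nat.card_congr (comap_surjective_quot_equiv hf s).some

theorem nc_push_equiv (e : α ≃ β) (s : Setoid α) : nc (push (⇑e) s) = nc s := by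
  rw [push_equiv]
  exact nc_comap_surjective e.symm.surjective s

theorem nc_ker_surjective {f : α → β} (hf : Function.Surjective f) :
    nc (Setoid.ker f) = Nat.card β :=
  Nat.card_congr (Setoid.quotientKerEquivOfSurjective f hf)

theorem ker_rel (f : α → β) (x y : α) : Setoid.ker f x y ↔ f x = f y := Iff.rfl

theorem comap_ker (f : α → β) (g : β → γ) :
    Setoid.comap f (Setoid.ker g) = Setoid.ker (g ∘ f) := rfl

theorem ker_comp_injective {f : α → β} {g : β → γ} (hg : Function.Injective g) :
    Setoid.ker (g ∘ f) = Setoid.ker f := by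
  ext x y
  exact ⟨fun h => hg h, fun h => congrArg g h⟩

/-- contraction: for surjective g, `comap g (push g s) = s ⊔ ker g`. -/
theorem comap_push_self {g : α → β} (hg : Function.Surjective g) (s : Setoid α) :
    Setoid.comap g (push g s) = s ⊔ Setoid.ker g := by
  apply le_antisymm
  · -- construct auxiliary setoid u on β
    set u : Setoid β :=
      ⟨fun a b => ∀ x y, g x = a → g y = b → (s ⊔ Setoid.ker g) x y, by
        constructor
        · intro a x y hx hy
          exact le_sup_right (α := Setoid α) (show Setoid.ker g x y from hx.trans hy.symm)
        · intro a b h x y hx hy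
          exact Setoid.symm' _ (h y x hy hx)
        · intro a b c h1 h2 x y hx hy
          obtain ⟨z, hz⟩ := hg b
          exact Setoid.trans' _ (h1 x z hx hz) (h2 z y hz hy)⟩ with hu
    have hle : push g s ≤ u := by
      rw [push_le_iff]
      intro a b hab x y hx hy
      have h1 : Setoid.ker g x a := hx
      have h2 : Setoid.ker g b y := hy.symm
      exact Setoid.trans' _ (Setoid.trans' _ (le_sup_right (α := Setoid α) h1)
        (le_sup_left (α := Setoid α) hab)) (le_sup_right (α := Setoid α) h2)
    intro x y hxy
    rw [Setoid.comap_rel] at hxy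
    exact hle hxy x y rfl rfl
  · apply sup_le
    · intro x y h
      rw [Setoid.comap_rel]
      exact push_rel g s h
    · intro x y h
      rw [Setoid.comap_rel]
      rw [ker_rel] at h
      rw [h]

theorem nc_sup_ker {g : α → β} (hg : Function.Surjective g) (s : Setoid α) :
    nc (s ⊔ Setoid.ker g) = nc (push g s) := by
  rw [← comap_push_self hg s, nc_comap_surjective hg]


variable {α β γ : Type*}

theorem quot_mk_eq_iff (s : Setoid α) (x y : α) :
    Quotient.mk s x = Quotient.mk s y ↔ s x y := by
  constructor
  · exact Quotient.exact
  · exact Quotient.sound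

/-- splitting the classes of `S` into those meeting the range of `f` and the rest. -/
theorem nc_split [Finite α] (S : Setoid α) (f : β → α) :
    nc S = nc (Setoid.comap f S) +
      Nat.card {c : Quotient S // ∀ x, Quotient.mk S x = c → x ∉ Set.range f} := by
  classical
  set q : Quotient S → Prop := fun c => ∃ w, Quotient.mk S (f w) = c with hq
  have h1 : nc (Setoid.comap f S) = Nat.card {c : Quotient S // q c} := by
    refine Nat.card_congr ((Setoid.comapQuotientEquiv f S).trans (Equiv.subtypeEquivRight ?_))
    intro c
    simp [hq, Set.range, Function.comp]
  have h2 : ∀ c : Quotient S, (¬ q c) ↔ (∀ x, Quotient.mk S x = c → x ∉ Set.range f) := by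
    intro c
    constructor
    · rintro h x rfl ⟨w, rfl⟩
      exact h ⟨w, rfl⟩
    · rintro h ⟨w, rfl⟩
      exact h (f w) rfl ⟨w, rfl⟩
  have h3 : Nat.card {c : Quotient S // ∀ x, Quotient.mk S x = c → x ∉ Set.range f}
      = Nat.card {c : Quotient S // ¬ q c} :=
    Nat.card_congr (Equiv.subtypeEquivRight (fun c => (h2 c).symm))
  have h4 : Nat.card (Quotient S) = Nat.card {c : Quotient S // q c} +
      Nat.card {c : Quotient S // ¬ q c} := by
    rw [← Nat.card_sum]
    exact Nat.card_congr (Equiv.sumCompl q).symm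
  rw [nc, h4, h1, h3]


variable {α β γ : Type*}

/-- core isolation lemma: if the class of `x` under `S` lies in `P` and edges of `E`
avoid `P`, then the `(S ⊔ EqvGen E)`-class of `x` equals its `S`-class. -/
theorem rel_of_sup_eqvGen {S : Setoid α} {E : α → α → Prop} {P : α → Prop}
    (hE : ∀ x y, E x y → ¬ P x ∧ ¬ P y) {x : α} (hx : ∀ z, S x z → P z) {y : α}
    (h : (S ⊔ Relation.EqvGen.setoid E) x y) : S x y := by
  set S' : Setoid α := ⟨fun a b => S a b ∨ (¬ S x a ∧ ¬ S x b), by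
    constructor
    · intro a; exact Or.inl (Setoid.refl' S a)
    · rintro a b (h | ⟨h1, h2⟩)
      · exact Or.inl (Setoid.symm' S h)
      · exact Or.inr ⟨h2, h1⟩
    · rintro a b c (hab | ⟨ha, hb⟩) (hbc | ⟨hb', hc⟩)
      · exact Or.inl (Setoid.trans' S hab hbc)
      · refine Or.inr ⟨fun hxa => hb' (Setoid.trans' S hxa hab), hc⟩
      · refine Or.inr ⟨ha, fun hxc => hb (Setoid.trans' S hxc (Setoid.symm' S hbc))⟩
      · exact Or.inr ⟨ha, hc⟩⟩ with hS'
  have hle : S ⊔ Relation.EqvGen.setoid E ≤ S' := by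
    apply sup_le
    · intro a b h; exact Or.inl h
    · apply Setoid.eqvGen_le
      intro a b hab
      obtain ⟨hpa, hpb⟩ := hE a b hab
      exact Or.inr ⟨fun h => hpa (hx a h), fun h => hpb (hx b h)⟩
  rcases hle h with h' | ⟨h1, _⟩
  · exact h'
  · exact absurd (Setoid.refl' S x) h1

theorem card_mid_sup (S : Setoid α) (E : α → α → Prop) (P : α → Prop)
    (hE : ∀ x y, E x y → ¬ P x ∧ ¬ P y) :
    Nat.card {c : Quotient (S ⊔ Relation.EqvGen.setoid E) //
        ∀ x, Quotient.mk _ x = c → P x} =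
      Nat.card {c : Quotient S // ∀ x, Quotient.mk S x = c → P x} := by
  set T := S ⊔ Relation.EqvGen.setoid E with hT
  have hST : S ≤ T := le_sup_left
  -- class predicate transfer
  have key : ∀ x : α, (∀ z, S x z → P z) → ∀ y, T x y → S x y :=
    fun x hx y h => rel_of_sup_eqvGen hE hx h
  refine Nat.card_congr (Equiv.symm ?_)
  refine ⟨fun c => ⟨Quotient.mk T c.1.out, ?_⟩, fun c => ⟨Quotient.mk S c.1.out, ?_⟩, ?_, ?_⟩
  · -- pred_T holds
    obtain ⟨c, hc⟩ := c
    intro w hw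
    have hx : ∀ z, S c.out z → P z := by
      intro z hz
      exact hc z (((quot_mk_eq_iff S _ _).2 (Setoid.symm' S hz)).trans c.out_eq)
    have : T c.out w := Setoid.symm' T ((quot_mk_eq_iff T _ _).1 hw)
    exact hx w (key _ hx _ this)
  · -- pred_S holds
    obtain ⟨c, hc⟩ := c
    intro w hw
    have : S c.out w := Setoid.symm' S ((quot_mk_eq_iff S _ _).1 hw)
    refine hc w ?_
    exact ((quot_mk_eq_iff T _ _).2 (hST this)).symm.trans c.out_eq |>.symm ▸ rfl
  · -- left inverse (on S side)
    rintro ⟨c, hc⟩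
    apply Subtype.ext
    dsimp only
    -- need: mk S (mk T c.out).out = c
    have hx : ∀ z, S c.out z → P z := by
      intro z hz
      exact hc z (((quot_mk_eq_iff S _ _).2 (Setoid.symm' S hz)).trans c.out_eq)
    have h1 : T c.out (Quotient.mk T c.out).out := by
      rw [← quot_mk_eq_iff T]
      exact (Quotient.out_eq _).symm ▸ rfl
    have h2 : S c.out (Quotient.mk T c.out).out := key _ hx _ h1
    calc Quotient.mk S (Quotient.mk T c.out).out
        = Quotient.mk S c.out := (quot_mk_eq_iff S _ _).2 (Setoid.symm' S h2)
      _ = c := c.out_eq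
  · -- right inverse (on T side)
    rintro ⟨c, hc⟩
    apply Subtype.ext
    dsimp only
    calc Quotient.mk T (Quotient.mk S c.out).out
        = Quotient.mk T c.out := by
          refine (quot_mk_eq_iff T _ _).2 ?_
          refine Setoid.symm' T (hST ?_)
          rw [← quot_mk_eq_iff S]
          exact (Quotient.out_eq _).symm ▸ rfl
      _ = c := c.out_eq



end Infra

section Diagrams

variable {k : ℕ}

/-- the outer map -/
def oMap (k : ℕ) : Fin k ⊕ Fin k → Fin k ⊕ (Fin k ⊕ Fin k) :=
  Sum.elim Sum.inl (fun i => Sum.inr (Sum.inr i))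

theorem comp_eq_comap (p q : Pk k) : comp p q = Setoid.comap (oMap k) (stackSetoid p q) := rfl

theorem stack_eq (p q : Pk k) :
    stackSetoid p q = push (upMap k) q ⊔ push (downMap k) p := by
  apply le_antisymm
  · apply sInf_le
    rintro x y (⟨a, b, rfl, rfl, hab⟩ | ⟨a, b, rfl, rfl, hab⟩)
    · exact le_sup_left (α := Setoid _) (push_rel (upMap k) q hab)
    · exact le_sup_right (α := Setoid _) (push_rel (downMap k) p hab)
  · apply sup_le <;> rw [push_le_iff] <;> intro a b hab <;>
      intro s hs
    · exact hs _ _ (Or.inl ⟨a, b, rfl, rfl, hab⟩)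
    · exact hs _ _ (Or.inr ⟨a, b, rfl, rfl, hab⟩)

end Diagrams
section Diagrams2

variable {k : ℕ}

theorem oMap_injective (k : ℕ) : Function.Injective (oMap k) := by
  rintro (a | a) (b | b) h <;> simp [oMap] at h <;> simp [h]

theorem not_range_oMap_iff (x : Fin k ⊕ (Fin k ⊕ Fin k)) :
    x ∉ Set.range (oMap k) ↔ ∃ i : Fin k, x = Sum.inr (Sum.inl i) := by
  constructor
  · intro h
    rcases x with a | (a | a)
    · exact absurd ⟨Sum.inl a, rfl⟩ h
    · exact ⟨a, rfl⟩
    · exact absurd ⟨Sum.inr a, rfl⟩ h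
  · rintro ⟨i, rfl⟩ ⟨(a | a), h⟩ <;> simp [oMap] at h

theorem comap_oMap_sup (p q r : Pk k) :
    Setoid.comap (oMap k) (stackSetoid p q ⊔ push (oMap k) r) = comp p q ⊔ r := by
  apply le_antisymm
  · set S := stackSetoid p q with hS
    set R2 : Pk k := comp p q ⊔ r with hR2
    set mid : (Fin k ⊕ (Fin k ⊕ Fin k)) → Prop := fun u => ∀ w, S u w → w ∉ Set.range (oMap k)
      with hmid
    set V : Setoid (Fin k ⊕ (Fin k ⊕ Fin k)) :=
      ⟨fun u v => (S u v ∧ mid u) ∨ ∃ a b, R2 a b ∧ S u (oMap k a) ∧ S v (oMap k b), by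
        constructor
        · intro u
          by_cases hu : mid u
          · exact Or.inl ⟨Setoid.refl' S u, hu⟩
          · simp only [hmid, not_forall] at hu
            obtain ⟨w, hw, hwr⟩ := hu
            rw [not_not] at hwr
            obtain ⟨a, rfl⟩ := hwr
            exact Or.inr ⟨a, a, Setoid.refl' R2 a, hw, hw⟩
        · rintro u v (⟨h, hm⟩ | ⟨a, b, hab, hu, hv⟩)
          · refine Or.inl ⟨Setoid.symm' S h, ?_⟩
            intro w hw
            exact hm w (Setoid.trans' S h hw)
          · exact Or.inr ⟨b, a, Setoid.symm' R2 hab, hv, hu⟩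
        · rintro u v w (⟨h1, hm1⟩ | ⟨a, b, hab, hu, hv⟩) (⟨h2, hm2⟩ | ⟨a', b', hab', hv', hw'⟩)
          · exact Or.inl ⟨Setoid.trans' S h1 h2, hm1⟩
          · exact absurd ⟨a', rfl⟩ (hm1 _ (Setoid.trans' S h1 hv'))
          · exact absurd ⟨b, rfl⟩ (hm2 _ hv)
          · refine Or.inr ⟨a, b', ?_, hu, hw'⟩
            have hmidrel : R2 b a' := by
              have : S (oMap k b) (oMap k a') := Setoid.trans' S (Setoid.symm' S hv) hv'
              exact le_sup_left (α := Pk k) (show comp p q b a' from this)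
            exact Setoid.trans' R2 (Setoid.trans' R2 hab hmidrel) hab'⟩ with hV
    have hle : stackSetoid p q ⊔ push (oMap k) r ≤ V := by
      apply sup_le
      · intro u v h
        by_cases hu : mid u
        · exact Or.inl ⟨h, hu⟩
        · simp only [hmid, not_forall] at hu
          obtain ⟨w, hw, hwr⟩ := hu
          rw [not_not] at hwr
          obtain ⟨a, rfl⟩ := hwr
          exact Or.inr ⟨a, a, Setoid.refl' R2 a, hw, Setoid.trans' S (Setoid.symm' S h) hw⟩
      · apply Setoid.eqvGen_le
        rintro x y ⟨a, b, rfl, rfl, hab⟩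
        exact Or.inr ⟨a, b, le_sup_right (α := Pk k) hab, Setoid.refl' S _, Setoid.refl' S _⟩
    intro x y hxy
    rw [Setoid.comap_rel] at hxy
    rcases hle hxy with ⟨_, hm⟩ | ⟨a, b, hab, hx, hy⟩
    · exact absurd ⟨x, rfl⟩ (hm (oMap k x) (Setoid.refl' S _))
    · have h1 : R2 x a := le_sup_left (α := Pk k) (show comp p q x a from hx)
      have h2 : R2 b y := le_sup_left (α := Pk k)
        (show comp p q b y from Setoid.symm' S hy)
      exact Setoid.trans' R2 (Setoid.trans' R2 h1 hab) h2
  · apply sup_le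
    · intro x y h
      rw [Setoid.comap_rel]
      exact le_sup_left (α := Setoid _) (show stackSetoid p q _ _ from h)
    · intro x y h
      rw [Setoid.comap_rel]
      exact le_sup_right (α := Setoid _) (push_rel (oMap k) r h)

end Diagrams2
section Diagrams3

variable {k : ℕ}

theorem kappaP_eq (p q : Pk k) :
    kappaP p q = Nat.card {c : Quotient (stackSetoid p q) //
      ∀ x, Quotient.mk (stackSetoid p q) x = c → x ∉ Set.range (oMap k)} := by
  refine Nat.card_congr (Equiv.subtypeEquivRight fun c => ?_)
  constructor
  · intro h x hx
    rw [not_range_oMap_iff]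
    exact h x hx
  · intro h x hx
    rw [← not_range_oMap_iff]
    exact h x hx

theorem main_count (p q r : Pk k) :
    nc (stackSetoid p q ⊔ push (oMap k) r) = nc (comp p q ⊔ r) + kappaP p q := by
  have h1 := nc_split (stackSetoid p q ⊔ push (oMap k) r) (oMap k)
  rw [comap_oMap_sup] at h1
  rw [h1]
  congr 1
  rw [kappaP_eq]
  exact card_mid_sup (stackSetoid p q)
    (fun x y => ∃ a b, oMap k a = x ∧ oMap k b = y ∧ r a b)
    (fun x => x ∉ Set.range (oMap k))
    (by rintro x y ⟨a, b, rfl, rfl, hab⟩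
        exact ⟨fun h => h ⟨a, rfl⟩, fun h => h ⟨b, rfl⟩⟩)

end Diagrams3
section Diagrams4

variable {k : ℕ}

theorem push_swap_eq (p : Pk k) : push Sum.swap p = transpose p := by
  have h := push_equiv (Equiv.sumComm (Fin k) (Fin k)) p
  have h1 : ⇑(Equiv.sumComm (Fin k) (Fin k)) = (Sum.swap : Fin k ⊕ Fin k → Fin k ⊕ Fin k) := rfl
  have h2 : ⇑(Equiv.sumComm (Fin k) (Fin k)).symm
      = (Sum.swap : Fin k ⊕ Fin k → Fin k ⊕ Fin k) := rfl
  rw [h1, h2] at h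
  exact h

theorem transpose_transpose (p : Pk k) : transpose (transpose p) = p := by
  show Setoid.comap Sum.swap (Setoid.comap Sum.swap p) = p
  rw [comap_comp']
  have : (Sum.swap ∘ Sum.swap : Fin k ⊕ Fin k → Fin k ⊕ Fin k) = id := by
    funext x; rcases x with a | a <;> rfl
  rw [this]
  rfl

theorem transpose_sup (p q : Pk k) : transpose (p ⊔ q) = transpose p ⊔ transpose q := by
  rw [← push_swap_eq, ← push_swap_eq, ← push_swap_eq, push_sup]

/-- contraction of the three-row diagram identifying outer rows with `id`. -/
def g3 (k : ℕ) : Fin k ⊕ (Fin k ⊕ Fin k) → Fin k ⊕ Fin k :=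
  Sum.elim Sum.inl (Sum.elim Sum.inr Sum.inl)

theorem g3_surjective (k : ℕ) : Function.Surjective (g3 k) := by
  rintro (a | a)
  · exact ⟨Sum.inl a, rfl⟩
  · exact ⟨Sum.inr (Sum.inl a), rfl⟩

theorem push_oMap_idk : push (oMap k) (idk k) = Setoid.ker (g3 k) := by
  apply le_antisymm
  · rw [push_le_iff]
    rintro (a | a) (b | b) hab <;>
      replace hab := Setoid.ker_def.1 hab <;>
      simp only [idk, Setoid.ker_def, Sum.elim_inl, Sum.elim_inr, id] at hab <;>
      subst hab <;> rfl
  · intro x y h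
    rcases x with x | (x | x) <;> rcases y with y | (y | y) <;>
      simp only [Setoid.ker_def, g3, Sum.elim_inl, Sum.elim_inr, Sum.inl.injEq,
        Sum.inr.injEq, reduceCtorEq] at h
    · subst h; exact Setoid.refl' _ _
    · subst h
      exact push_rel (oMap k) (idk k) (show idk k (Sum.inl x) (Sum.inr x) from rfl)
    · subst h; exact Setoid.refl' _ _
    · subst h
      exact Setoid.symm' _
        (push_rel (oMap k) (idk k) (show idk k (Sum.inl _) (Sum.inr _) from rfl))
    · subst h; exact Setoid.refl' _ _

theorem contr_count (p q : Pk k) :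
    nc (stackSetoid p q ⊔ push (oMap k) (idk k)) = nc (q ⊔ transpose p) := by
  rw [push_oMap_idk, nc_sup_ker (g3_surjective k), stack_eq, push_sup, push_push, push_push]
  have h1 : g3 k ∘ upMap k = id := by
    funext x; rcases x with a | a <;> rfl
  have h2 : g3 k ∘ downMap k = Sum.swap := by
    funext x; rcases x with a | a <;> rfl
  rw [h1, h2, push_id, push_swap_eq]

end Diagrams4
section Diagrams5

variable {k : ℕ}

theorem nc_transpose (p : Pk k) : nc (transpose p) = nc p :=
  nc_comap_surjective (fun x => ⟨Sum.swap x, by rcases x with a | a <;> rfl⟩) p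

/-- the row exchange B ↔ C on the three-row diagram. -/
def eBC (k : ℕ) : (Fin k ⊕ (Fin k ⊕ Fin k)) ≃ (Fin k ⊕ (Fin k ⊕ Fin k)) :=
  (Equiv.refl (Fin k)).sumCongr (Equiv.sumComm (Fin k) (Fin k))

/-- the row exchange A ↔ B on the three-row diagram. -/
def eAB (k : ℕ) : (Fin k ⊕ (Fin k ⊕ Fin k)) ≃ (Fin k ⊕ (Fin k ⊕ Fin k)) where
  toFun := Sum.elim (fun a => Sum.inr (Sum.inl a))
    (Sum.elim Sum.inl (fun a => Sum.inr (Sum.inr a)))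
  invFun := Sum.elim (fun a => Sum.inr (Sum.inl a))
    (Sum.elim Sum.inl (fun a => Sum.inr (Sum.inr a)))
  left_inv := by rintro (a | (a | a)) <;> rfl
  right_inv := by rintro (a | (a | a)) <;> rfl

theorem relabelBC (p₀ p₁ p₂ : Pk k) :
    nc (stackSetoid (transpose p₁) p₀ ⊔ push (oMap k) p₂) =
      nc (stackSetoid p₁ p₂ ⊔ push (oMap k) p₀) := by
  rw [← nc_push_equiv (eBC k) (stackSetoid (transpose p₁) p₀ ⊔ push (oMap k) p₂)]
  congr 1
  rw [stack_eq, stack_eq, push_sup, push_sup, push_push, push_push, push_push]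
  have h1 : ⇑(eBC k) ∘ upMap k = oMap k := by funext x; rcases x with a | a <;> rfl
  have h2 : ⇑(eBC k) ∘ downMap k = downMap k ∘ Sum.swap := by
    funext x; rcases x with a | a <;> rfl
  have h3 : ⇑(eBC k) ∘ oMap k = upMap k := by funext x; rcases x with a | a <;> rfl
  rw [h1, h2, h3, ← push_push, push_swap_eq, transpose_transpose]
  rw [sup_comm, sup_comm (push (oMap k) p₀) (push (downMap k) p₁), ← sup_assoc]

theorem relabelAB (p₀ p₁ p₂ : Pk k) :
    nc (stackSetoid p₀ (transpose p₂) ⊔ push (oMap k) p₁) =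
      nc (stackSetoid p₁ p₂ ⊔ push (oMap k) p₀) := by
  rw [← nc_push_equiv (eAB k) (stackSetoid p₀ (transpose p₂) ⊔ push (oMap k) p₁)]
  congr 1
  rw [stack_eq, stack_eq, push_sup, push_sup, push_push, push_push, push_push]
  have h1 : ⇑(eAB k) ∘ upMap k = upMap k ∘ Sum.swap := by
    funext x; rcases x with a | a <;> rfl
  have h2 : ⇑(eAB k) ∘ downMap k = oMap k := by funext x; rcases x with a | a <;> rfl
  have h3 : ⇑(eAB k) ∘ oMap k = downMap k := by funext x; rcases x with a | a <;> rfl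
  rw [h1, h2, h3, ← push_push, push_swap_eq, transpose_transpose]
  rw [sup_assoc, sup_comm (push (oMap k) p₀) (push (downMap k) p₁), ← sup_assoc]

end Diagrams5
section Tensor

variable {k l : ℕ}

theorem nc_idk (k : ℕ) : nc (idk k) = k := by
  have hs : Function.Surjective (Sum.elim id id : Fin k ⊕ Fin k → Fin k) :=
    fun i => ⟨Sum.inl i, rfl⟩
  rw [idk, nc_ker_surjective hs, Nat.card_eq_fintype_card, Fintype.card_fin]

theorem sumSetoid_eq {α β : Type*} (p : Setoid α) (q : Setoid β) :
    sumSetoid p q = push Sum.inl p ⊔ push Sum.inr q := by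
  apply le_antisymm
  · rintro (x | x) (y | y) h <;>
      replace h := Setoid.ker_def.1 h <;>
      simp only [sumSetoid, Setoid.ker_def, Sum.map_inl, Sum.map_inr, Sum.inl.injEq,
        Sum.inr.injEq, reduceCtorEq] at h
    · exact le_sup_left (α := Setoid _) (push_rel Sum.inl p (Quotient.exact h))
    · exact le_sup_right (α := Setoid _) (push_rel Sum.inr q (Quotient.exact h))
  · apply sup_le <;> rw [push_le_iff] <;> intro a b hab
    · exact congrArg Sum.inl (Quotient.sound hab)
    · exact congrArg Sum.inr (Quotient.sound hab)

theorem nc_sumSetoid {α β : Type*} [Finite α] [Finite β] (p : Setoid α) (q : Setoid β) :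
    nc (sumSetoid p q) = nc p + nc q := by
  have hs : Function.Surjective (Sum.map (Quotient.mk p) (Quotient.mk q)) := by
    rintro (c | c)
    · obtain ⟨a, rfl⟩ := Quotient.exists_rep c; exact ⟨Sum.inl a, rfl⟩
    · obtain ⟨a, rfl⟩ := Quotient.exists_rep c; exact ⟨Sum.inr a, rfl⟩
  rw [sumSetoid, nc_ker_surjective hs, Nat.card_sum]
  rfl

/-- the reindexing bijection as an equivalence. -/
def rE (k l : ℕ) : (Fin (k + l) ⊕ Fin (k + l)) ≃ ((Fin k ⊕ Fin k) ⊕ (Fin l ⊕ Fin l)) where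
  toFun := reindex k l
  invFun := Sum.elim
    (Sum.elim (fun a => Sum.inl (finSumFinEquiv (Sum.inl a)))
      (fun a => Sum.inr (finSumFinEquiv (Sum.inl a))))
    (Sum.elim (fun b => Sum.inl (finSumFinEquiv (Sum.inr b)))
      (fun b => Sum.inr (finSumFinEquiv (Sum.inr b))))
  left_inv := by
    rintro (j | j) <;>
    · rcases h : finSumFinEquiv.symm j with a | b <;>
        simp only [reindex, h, Sum.elim_inl, Sum.elim_inr] <;>
        rw [← h, Equiv.apply_symm_apply]
  right_inv := by
    rintro ((a | a) | (b | b)) <;>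
      simp only [reindex, Sum.elim_inl, Sum.elim_inr, Equiv.symm_apply_apply]

theorem tensor_eq (p : Pk k) (q : Pk l) :
    tensor p q = push (⇑(rE k l).symm) (sumSetoid p q) := by
  rw [push_equiv]
  rfl

theorem nc_tensor (p : Pk k) (q : Pk l) : nc (tensor p q) = nc p + nc q := by
  rw [tensor_eq, nc_push_equiv, nc_sumSetoid]

theorem tensor_sup (p p' : Pk k) (q q' : Pk l) :
    tensor p q ⊔ tensor p' q' = tensor (p ⊔ p') (q ⊔ q') := by
  rw [tensor_eq, tensor_eq, tensor_eq, ← push_sup]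
  congr 1
  rw [sumSetoid_eq, sumSetoid_eq, sumSetoid_eq, push_sup, push_sup]
  rw [sup_assoc, ← sup_assoc (push Sum.inr q), sup_comm (push Sum.inr q) (push Sum.inl p'),
    sup_assoc, ← sup_assoc]

end Tensor
section Tensor2

variable {k : ℕ}

theorem ker_eq_of_factor {α β γ : Type*} {f : α → β} {g : α → γ} (φ : β → γ) (ψ : γ → β)
    (h1 : ∀ x, φ (f x) = g x) (h2 : ∀ x, ψ (g x) = f x) : Setoid.ker f = Setoid.ker g := by
  ext x y
  constructor
  · intro h
    show g x = g y
    rw [← h1 x, ← h1 y, show f x = f y from h]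
  · intro h
    show f x = f y
    rw [← h2 x, ← h2 y, show g x = g y from h]

theorem idk_tensor : idk (k + k) = tensor (idk k) (idk k) := by
  have htens : tensor (idk k) (idk k) =
      Setoid.ker ((Sum.map (Quotient.mk (idk k)) (Quotient.mk (idk k))) ∘ reindex k k) := rfl
  rw [htens, idk]
  refine ker_eq_of_factor
    (f := (Sum.elim id id : Fin (k+k) ⊕ Fin (k+k) → Fin (k+k)))
    (g := (Sum.map (Quotient.mk (idk k)) (Quotient.mk (idk k))) ∘ reindex k k)
    (Sum.elim (fun a => Sum.inl (Quotient.mk (idk k) (Sum.inl a)))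
      (fun a => Sum.inr (Quotient.mk (idk k) (Sum.inl a))) ∘ finSumFinEquiv.symm)
    (Sum.elim (fun c => finSumFinEquiv
        (Sum.inl (Quotient.lift (Sum.elim id id) (fun a b (h : idk k a b) => h) c)))
      (fun c => finSumFinEquiv
        (Sum.inr (Quotient.lift (Sum.elim id id) (fun a b (h : idk k a b) => h) c))))
    ?_ ?_
  · rintro (j | j) <;> rcases hs : finSumFinEquiv.symm j with a | a <;>
      simp only [Sum.elim_inl, Sum.elim_inr, Function.comp_apply, hs, id, reindex,
        Sum.map_inl, Sum.map_inr] <;>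
      first
        | rfl
        | exact congrArg Sum.inl
            (Quotient.sound (show idk k (Sum.inl a) (Sum.inr a) from rfl))
        | exact congrArg Sum.inr
            (Quotient.sound (show idk k (Sum.inl a) (Sum.inr a) from rfl))
  · rintro (j | j) <;> rcases hs : finSumFinEquiv.symm j with a | a <;>
      simp only [Sum.elim_inl, Sum.elim_inr, Function.comp_apply, hs, id, reindex,
        Sum.map_inl, Sum.map_inr, Quotient.lift_mk] <;>
      first
        | rw [← hs, Equiv.apply_symm_apply]
        | exact ((Equiv.symm_apply_eq _).mp hs).symm

theorem tau_castAdd (a : Fin k) : tauPerm k (Fin.castAdd k a) = Fin.natAdd k a := by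
  have h : (tauPerm k) (Fin.castAdd k a)
      = finSumFinEquiv ((Equiv.sumComm (Fin k) (Fin k))
          (finSumFinEquiv.symm (Fin.castAdd k a))) := rfl
  rw [h, finSumFinEquiv_symm_apply_castAdd]
  exact finSumFinEquiv_apply_right a

theorem tau_natAdd (a : Fin k) : tauPerm k (Fin.natAdd k a) = Fin.castAdd k a := by
  have h : (tauPerm k) (Fin.natAdd k a)
      = finSumFinEquiv ((Equiv.sumComm (Fin k) (Fin k))
          (finSumFinEquiv.symm (Fin.natAdd k a))) := rfl
  rw [h, finSumFinEquiv_symm_apply_natAdd]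
  exact finSumFinEquiv_apply_left a

theorem tau_symm : (tauPerm k).symm = tauPerm k := by
  apply Equiv.ext
  intro j
  rw [Equiv.symm_apply_eq]
  rcases hs : finSumFinEquiv.symm j with a | a
  · have hj : j = Fin.castAdd k a := by
      rw [← finSumFinEquiv_apply_left a, ← hs, Equiv.apply_symm_apply]
    rw [hj, tau_castAdd, tau_natAdd]
  · have hj : j = Fin.natAdd k a := by
      rw [← finSumFinEquiv_apply_right a, ← hs, Equiv.apply_symm_apply]
    rw [hj, tau_natAdd, tau_castAdd]

end Tensor2
section BigContr

variable {k : ℕ}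

theorem sup_rot {γ : Type*} (a b c : Setoid γ) : a ⊔ b ⊔ c = c ⊔ b ⊔ a := by
  rw [sup_comm, sup_comm a b, ← sup_assoc]

theorem elim_inl_inr {γ δ : Type*} : (Sum.elim Sum.inl Sum.inr : γ ⊕ δ → γ ⊕ δ) = id := by
  funext x; rcases x with a | a <;> rfl

theorem transpose_idk : transpose (idk k) = idk k := by
  show Setoid.comap Sum.swap (Setoid.ker (Sum.elim id id)) = _
  rw [comap_ker]
  have : (Sum.elim id id ∘ Sum.swap : Fin k ⊕ Fin k → Fin k) = Sum.elim id id := by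
    funext x; rcases x with a | a <;> rfl
  rw [this]; rfl

/-- contraction map collapsing the top row of the `2k` three-row diagram onto
the middle row along `τ`. -/
def G2 (k : ℕ) : Fin (k + k) ⊕ (Fin (k + k) ⊕ Fin (k + k)) → Fin (k + k) ⊕ Fin (k + k) :=
  Sum.elim (fun j => Sum.inl (tauPerm k j)) (Sum.elim Sum.inl Sum.inr)

theorem G2_surjective : Function.Surjective (G2 k) := by
  rintro (j | j)
  · exact ⟨Sum.inr (Sum.inl j), rfl⟩
  · exact ⟨Sum.inr (Sum.inr j), rfl⟩

theorem push_up_tauhat :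
    push (upMap (k + k)) (permPartition (tauPerm k)) = Setoid.ker (G2 k) := by
  apply le_antisymm
  · rw [push_le_iff]
    rintro (i | j) (i' | j') hab <;>
      replace hab := Setoid.ker_def.1 hab <;>
      simp only [permPartition, Setoid.ker_def, Sum.elim_inl, Sum.elim_inr, id] at hab
    · subst hab; rfl
    · show Sum.inl (tauPerm k i) = Sum.inl j'
      rw [hab, Equiv.apply_symm_apply]
    · show Sum.inl j = Sum.inl (tauPerm k i')
      rw [← hab, Equiv.apply_symm_apply]
    · rw [(tauPerm k).symm.injective hab]
  · intro x y h
    rcases x with i | (j | j) <;> rcases y with i' | (j' | j') <;>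
      simp only [Setoid.ker_def, G2, Sum.elim_inl, Sum.elim_inr, Sum.inl.injEq,
        Sum.inr.injEq, reduceCtorEq] at h
    · rw [(tauPerm k).injective h]
    · refine push_rel (upMap (k + k)) (permPartition (tauPerm k))
        (show permPartition (tauPerm k) (Sum.inl i) (Sum.inr j') from ?_)
      show i = (tauPerm k).symm j'
      rw [← h, Equiv.symm_apply_apply]
    · refine Setoid.symm' _ (push_rel (upMap (k + k)) (permPartition (tauPerm k))
        (show permPartition (tauPerm k) (Sum.inl i') (Sum.inr j) from ?_))
      show i' = (tauPerm k).symm j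
      rw [h, Equiv.symm_apply_apply]
    · subst h; exact Setoid.refl' _ _
    · subst h; exact Setoid.refl' _ _

theorem contrU (p₀ : Pk k) (r : Pk (k + k)) :
    nc (stackSetoid (tensor p₀ (idk k)) (permPartition (tauPerm k)) ⊔ push (oMap (k + k)) r)
      = nc (tensor p₀ (idk k) ⊔ push (Sum.map (⇑(tauPerm k)) id) r) := by
  rw [stack_eq, push_up_tauhat]
  have hre : Setoid.ker (G2 k) ⊔ push (downMap (k + k)) (tensor p₀ (idk k))
        ⊔ push (oMap (k + k)) r
      = (push (downMap (k + k)) (tensor p₀ (idk k)) ⊔ push (oMap (k + k)) r)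
        ⊔ Setoid.ker (G2 k) := by
    rw [sup_comm (Setoid.ker (G2 k)) _, sup_assoc, sup_comm (Setoid.ker (G2 k)) _, ← sup_assoc]
  rw [hre, nc_sup_ker G2_surjective, push_sup, push_push, push_push]
  have h1 : G2 k ∘ downMap (k + k) = id := by funext x; rcases x with a | a <;> rfl
  have h2 : G2 k ∘ oMap (k + k) = Sum.map (⇑(tauPerm k)) id := by
    funext x; rcases x with a | a <;> rfl
  rw [h1, h2, push_id]

theorem ncU_B (p₀ : Pk k) :
    nc (tensor p₀ (idk k) ⊔ push (Sum.map (⇑(tauPerm k)) id) (idk (k + k)))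
      = nc (idk k ⊔ p₀) := by
  set mE := Equiv.sumCongr (tauPerm k) (Equiv.refl (Fin (k + k))) with hmE
  have hco : Sum.map (⇑(tauPerm k)) id = ⇑mE := by
    funext x; rcases x with a | a <;> rfl
  rw [hco, push_equiv]
  have hker : Setoid.comap (⇑mE.symm) (idk (k + k))
      = Setoid.ker (Sum.elim id id ∘ ⇑mE.symm) := rfl
  rw [hker]
  rw [← nc_push_equiv (rE k k) (tensor p₀ (idk k) ⊔ Setoid.ker (Sum.elim id id ∘ ⇑mE.symm))]
  rw [push_sup]
  have hrr : ⇑(rE k k) ∘ ⇑(rE k k).symm = id := by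
    funext x; exact Equiv.apply_symm_apply _ x
  have htens : push (⇑(rE k k)) (tensor p₀ (idk k)) = sumSetoid p₀ (idk k) := by
    rw [tensor_eq, push_push, hrr, push_id]
  have hker2 : push (⇑(rE k k)) (Setoid.ker (Sum.elim id id ∘ ⇑mE.symm))
      = Setoid.ker ((Sum.elim id id ∘ ⇑mE.symm) ∘ ⇑(rE k k).symm) := by
    rw [push_equiv]; rfl
  have hH : (Sum.elim id id ∘ ⇑mE.symm) ∘ ⇑(rE k k).symm
      = (⇑finSumFinEquiv ∘ Sum.swap) ∘ (Sum.elim id Sum.swap :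
          (Fin k ⊕ Fin k) ⊕ (Fin k ⊕ Fin k) → Fin k ⊕ Fin k) := by
    funext x
    rcases x with (a | a) | (a | a) <;>
      simp only [Function.comp_apply, Sum.elim_inl, Sum.elim_inr, id, Sum.swap_inl,
        Sum.swap_inr, rE, Equiv.coe_fn_symm_mk, hmE, Equiv.sumCongr_symm, Equiv.symm_symm,
        Equiv.sumCongr_apply, Sum.map_inl, Sum.map_inr]
    · rw [finSumFinEquiv_apply_left, tau_symm, tau_castAdd, finSumFinEquiv_apply_right]
    · rfl
    · rw [finSumFinEquiv_apply_right, tau_symm, tau_natAdd, finSumFinEquiv_apply_left]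
    · rfl
  rw [hker2, hH, ker_comp_injective (show Function.Injective
      (⇑finSumFinEquiv ∘ (Sum.swap : Fin k ⊕ Fin k → Fin k ⊕ Fin k)) from
      finSumFinEquiv.injective.comp (Equiv.sumComm (Fin k) (Fin k)).injective),
    htens]
  have hsurj : Function.Surjective
      (Sum.elim id Sum.swap : (Fin k ⊕ Fin k) ⊕ (Fin k ⊕ Fin k) → Fin k ⊕ Fin k) :=
    fun x => ⟨Sum.inl x, rfl⟩
  rw [nc_sup_ker hsurj, sumSetoid_eq, push_sup, push_push, push_push]
  have h1 : (Sum.elim id Sum.swap : (Fin k ⊕ Fin k) ⊕ (Fin k ⊕ Fin k) → Fin k ⊕ Fin k)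
      ∘ Sum.inl = id := rfl
  have h2 : (Sum.elim id Sum.swap : (Fin k ⊕ Fin k) ⊕ (Fin k ⊕ Fin k) → Fin k ⊕ Fin k)
      ∘ Sum.inr = Sum.swap := rfl
  rw [h1, h2, push_id, push_swap_eq, transpose_idk, sup_comm]

end BigContr
section BigContr2

variable {k : ℕ}

/-- contraction collapsing the right (identity) diagram of `p₀ ⊗ id` onto the middle row. -/
def K4 (k : ℕ) : (Fin k ⊕ Fin k) ⊕ (Fin k ⊕ Fin k) → Fin k ⊕ (Fin k ⊕ Fin k) :=
  Sum.elim (Sum.elim Sum.inl (fun a => Sum.inr (Sum.inr a)))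
    (fun x => Sum.inr (Sum.inl (Sum.elim id id x)))

theorem K4_surjective : Function.Surjective (K4 k) := by
  rintro (a | (a | a))
  · exact ⟨Sum.inl (Sum.inl a), rfl⟩
  · exact ⟨Sum.inr (Sum.inl a), rfl⟩
  · exact ⟨Sum.inl (Sum.inr a), rfl⟩

theorem push_inr_idk : push (Sum.inr : (Fin k ⊕ Fin k) → (Fin k ⊕ Fin k) ⊕ (Fin k ⊕ Fin k))
    (idk k) = Setoid.ker (K4 k) := by
  apply le_antisymm
  · rw [push_le_iff]
    intro a b hab
    show K4 k (Sum.inr a) = K4 k (Sum.inr b)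
    simp only [K4, Sum.elim_inr]
    exact congrArg (fun t => Sum.inr (Sum.inl t)) hab
  · intro x y h
    rcases x with (a | a) | x <;> rcases y with (b | b) | y <;>
      simp only [Setoid.ker_def, K4, Sum.elim_inl, Sum.elim_inr, Sum.inl.injEq,
        Sum.inr.injEq, reduceCtorEq] at h
    · subst h; exact Setoid.refl' _ _
    · subst h; exact Setoid.refl' _ _
    · exact push_rel Sum.inr (idk k) (show idk k x y from h)

theorem ncU_P (p₀ p₁ p₂ : Pk k) :
    nc (tensor p₀ (idk k) ⊔ push (Sum.map (⇑(tauPerm k)) id) (tensor p₁ p₂))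
      = nc (stackSetoid p₁ p₂ ⊔ push (oMap k) p₀) := by
  set mE := Equiv.sumCongr (tauPerm k) (Equiv.refl (Fin (k + k))) with hmE
  have hco : Sum.map (⇑(tauPerm k)) id = ⇑mE := by
    funext x; rcases x with a | a <;> rfl
  rw [hco]
  rw [← nc_push_equiv (rE k k) (tensor p₀ (idk k) ⊔ push (⇑mE) (tensor p₁ p₂))]
  rw [push_sup]
  have hrr : ⇑(rE k k) ∘ ⇑(rE k k).symm = id := by
    funext x; exact Equiv.apply_symm_apply _ x
  have htens : push (⇑(rE k k)) (tensor p₀ (idk k)) = sumSetoid p₀ (idk k) := by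
    rw [tensor_eq, push_push, hrr, push_id]
  have h12 : push (⇑(rE k k)) (push (⇑mE) (tensor p₁ p₂))
      = push ((⇑(rE k k) ∘ ⇑mE) ∘ ⇑(rE k k).symm) (sumSetoid p₁ p₂) := by
    rw [tensor_eq, push_push, push_push]
  rw [htens, h12, sumSetoid_eq p₁ p₂, push_sup, push_push, push_push]
  set c1 := ((⇑(rE k k) ∘ ⇑mE) ∘ ⇑(rE k k).symm) ∘ (Sum.inl : (Fin k ⊕ Fin k) → _) with hc1
  set c2 := ((⇑(rE k k) ∘ ⇑mE) ∘ ⇑(rE k k).symm) ∘ (Sum.inr : (Fin k ⊕ Fin k) → _) with hc2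
  have hc1' : c1 = Sum.elim (fun a => Sum.inr (Sum.inl a)) (fun a => Sum.inl (Sum.inr a)) := by
    funext x
    rcases x with a | a <;>
      simp only [hc1, Function.comp_apply, rE, Equiv.coe_fn_symm_mk, Equiv.coe_fn_mk,
        Sum.elim_inl, Sum.elim_inr, hmE, Equiv.sumCongr_apply, Sum.map_inl, Sum.map_inr, id]
    · rw [finSumFinEquiv_apply_left, tau_castAdd]
      simp only [reindex, finSumFinEquiv_symm_apply_natAdd, Sum.elim_inl, Sum.elim_inr]
    · simp only [reindex, Equiv.refl_apply, Equiv.symm_apply_apply, Sum.elim_inl, Sum.elim_inr]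
  have hc2' : c2 = Sum.elim (fun a => Sum.inl (Sum.inl a)) (fun a => Sum.inr (Sum.inr a)) := by
    funext x
    rcases x with a | a <;>
      simp only [hc2, Function.comp_apply, rE, Equiv.coe_fn_symm_mk, Equiv.coe_fn_mk,
        Sum.elim_inl, Sum.elim_inr, hmE, Equiv.sumCongr_apply, Sum.map_inl, Sum.map_inr, id]
    · rw [finSumFinEquiv_apply_right, tau_natAdd]
      simp only [reindex, finSumFinEquiv_symm_apply_castAdd, Sum.elim_inl, Sum.elim_inr]
    · simp only [reindex, Equiv.refl_apply, Equiv.symm_apply_apply, Sum.elim_inl, Sum.elim_inr]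
  rw [hc1', hc2', sumSetoid_eq p₀ (idk k), push_inr_idk]
  have hre : push Sum.inl p₀ ⊔ Setoid.ker (K4 k)
        ⊔ (push (Sum.elim (fun a => Sum.inr (Sum.inl a)) (fun a => Sum.inl (Sum.inr a))) p₁
          ⊔ push (Sum.elim (fun a => Sum.inl (Sum.inl a)) (fun a => Sum.inr (Sum.inr a))) p₂)
      = (push Sum.inl p₀
          ⊔ push (Sum.elim (fun a => Sum.inr (Sum.inl a)) (fun a => Sum.inl (Sum.inr a))) p₁
          ⊔ push (Sum.elim (fun a => Sum.inl (Sum.inl a)) (fun a => Sum.inr (Sum.inr a))) p₂)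
        ⊔ Setoid.ker (K4 k) := by
    rw [sup_assoc, sup_comm (Setoid.ker (K4 k)) _, ← sup_assoc, ← sup_assoc, sup_assoc]
  rw [hre, nc_sup_ker K4_surjective, push_sup, push_sup, push_push, push_push, push_push]
  have h1 : K4 k ∘ (Sum.inl : (Fin k ⊕ Fin k) → _) = oMap k := by
    funext x; rcases x with a | a <;> rfl
  have h2 : K4 k ∘ Sum.elim (fun a => Sum.inr (Sum.inl a)) (fun a => Sum.inl (Sum.inr a))
      = downMap k := by
    funext x; rcases x with a | a <;> rfl
  have h3 : K4 k ∘ Sum.elim (fun a => Sum.inl (Sum.inl a)) (fun a => Sum.inr (Sum.inr a))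
      = upMap k := by
    funext x; rcases x with a | a <;> rfl
  rw [h1, h2, h3, stack_eq]
  congr 1
  exact sup_rot _ _ _

end BigContr2

/-- The four quantities
`df(p₁∘p₂, p₀) + η(p₁,p₂)`, `df(p₁,p₀) + df(p₂, ᵗp₁∘p₀)`,
`df(p₁, p₀∘ᵗp₂) + df(p₂, p₀)` and `df(p₁⊗p₂, (p₀⊗id_k)∘τ)` are equal, where
`τ = (1,k+1)(2,k+2)⋯(k,2k)` and the last defect is taken in `P_{2k}` with base
`id_{2k}`. -/
theorem statement16 (k : ℕ) (hk : 0 < k) (p₀ p₁ p₂ : Pk k) :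
    df (idk k) (comp p₁ p₂) p₀ + eta p₁ p₂ =
      df (idk k) p₁ p₀ + df (idk k) p₂ (comp (transpose p₁) p₀) ∧
    df (idk k) (comp p₁ p₂) p₀ + eta p₁ p₂ =
      df (idk k) p₁ (comp p₀ (transpose p₂)) + df (idk k) p₂ p₀ ∧
    df (idk k) (comp p₁ p₂) p₀ + eta p₁ p₂ =
      df (idk (k + k)) (tensor p₁ p₂)
        (comp (tensor p₀ (idk k)) (permPartition (tauPerm k))) := by
  have hK : (nc (idk k) : ℚ) = (k : ℚ) := by exact_mod_cast congrArg Nat.cast (nc_idk k)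
  have e1 : (nc (comp p₁ p₂ ⊔ p₀) : ℚ) + (kappaP p₁ p₂ : ℚ)
      = (nc (stackSetoid p₁ p₂ ⊔ push (oMap k) p₀) : ℚ) := by
    exact_mod_cast congrArg Nat.cast (main_count p₁ p₂ p₀).symm
  have e2 : (nc (comp (transpose p₁) p₀ ⊔ p₂) : ℚ) + (kappaP (transpose p₁) p₀ : ℚ)
      = (nc (stackSetoid p₁ p₂ ⊔ push (oMap k) p₀) : ℚ) := by
    have h := (main_count (transpose p₁) p₀ p₂).symm.trans (relabelBC p₀ p₁ p₂)
    exact_mod_cast congrArg Nat.cast h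
  have e3 : (nc (comp (transpose p₁) p₀ ⊔ idk k) : ℚ) + (kappaP (transpose p₁) p₀ : ℚ)
      = (nc (p₀ ⊔ p₁) : ℚ) := by
    have h := contr_count (transpose p₁) p₀
    rw [transpose_transpose] at h
    have h2 := (main_count (transpose p₁) p₀ (idk k)).symm.trans h
    exact_mod_cast congrArg Nat.cast h2
  have e4 : (nc (comp p₀ (transpose p₂) ⊔ idk k) : ℚ) + (kappaP p₀ (transpose p₂) : ℚ)
      = (nc (p₂ ⊔ p₀) : ℚ) := by
    have h := contr_count p₀ (transpose p₂)
    rw [← transpose_sup, nc_transpose] at h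
    have h2 := (main_count p₀ (transpose p₂) (idk k)).symm.trans h
    exact_mod_cast congrArg Nat.cast h2
  have e5 : (nc (comp p₀ (transpose p₂) ⊔ p₁) : ℚ) + (kappaP p₀ (transpose p₂) : ℚ)
      = (nc (stackSetoid p₁ p₂ ⊔ push (oMap k) p₀) : ℚ) := by
    have h := (main_count p₀ (transpose p₂) p₁).symm.trans (relabelAB p₀ p₁ p₂)
    exact_mod_cast congrArg Nat.cast h
  have e6 : (nc (comp (tensor p₀ (idk k)) (permPartition (tauPerm k)) ⊔ tensor p₁ p₂) : ℚ)
        + (kappaP (tensor p₀ (idk k)) (permPartition (tauPerm k)) : ℚ)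
      = (nc (stackSetoid p₁ p₂ ⊔ push (oMap k) p₀) : ℚ) := by
    have h := (main_count (tensor p₀ (idk k)) (permPartition (tauPerm k))
      (tensor p₁ p₂)).symm.trans ((contrU p₀ (tensor p₁ p₂)).trans (ncU_P p₀ p₁ p₂))
    exact_mod_cast congrArg Nat.cast h
  have e7 : (nc (comp (tensor p₀ (idk k)) (permPartition (tauPerm k)) ⊔ idk (k + k)) : ℚ)
        + (kappaP (tensor p₀ (idk k)) (permPartition (tauPerm k)) : ℚ)
      = (nc (idk k ⊔ p₀) : ℚ) := by
    have h := (main_count (tensor p₀ (idk k)) (permPartition (tauPerm k))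
      (idk (k + k))).symm.trans ((contrU p₀ (idk (k + k))).trans (ncU_B p₀))
    exact_mod_cast congrArg Nat.cast h
  have e8 : (nc (idk (k + k) ⊔ tensor p₁ p₂) : ℚ)
      = (nc (idk k ⊔ p₁) : ℚ) + (nc (idk k ⊔ p₂) : ℚ) := by
    have h : nc (idk (k + k) ⊔ tensor p₁ p₂) = nc (idk k ⊔ p₁) + nc (idk k ⊔ p₂) := by
      rw [idk_tensor, tensor_sup, tensor_eq, nc_push_equiv, nc_sumSetoid]
    exact_mod_cast congrArg Nat.cast h
  have e9 : (nc (tensor p₁ p₂) : ℚ) = (nc p₁ : ℚ) + (nc p₂ : ℚ) := by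
    exact_mod_cast congrArg Nat.cast (nc_tensor p₁ p₂)
  refine ⟨?_, ?_, ?_⟩
  · simp only [df, eta, pdist]
    rw [sup_comm p₂ (comp (transpose p₁) p₀), sup_comm (idk k) (comp (transpose p₁) p₀),
      sup_comm p₁ p₀]
    linarith [e1, e2, e3, hK]
  · simp only [df, eta, pdist]
    rw [sup_comm p₁ (comp p₀ (transpose p₂)), sup_comm (idk k) (comp p₀ (transpose p₂))]
    linarith [e1, e4, e5, hK]
  · simp only [df, eta, pdist]
    rw [sup_comm (tensor p₁ p₂) (comp (tensor p₀ (idk k)) (permPartition (tauPerm k))),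
      sup_comm (idk (k + k)) (comp (tensor p₀ (idk k)) (permPartition (tauPerm k)))]
    linarith [e1, e6, e7, e8, e9, hK]


end PartitionPaper
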